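/- For the quadratic Hopfield interaction U(s, θ) := −(1/2) sᵀθs with θ ∈ ℝ^{n×n} symmetric, the gradient is ∇ₛU(s, θ) = −θs, and for the full block energy E(s, θ, x) = G(s) − ⟪s, x⟫ − (1/2)sᵀθs with ∇G = σ⁻¹ (σ invertible, differentiable), a point s⋆ is a critical point of s ↦ E(s, θ, x) iff s⋆ = σ(x + θ s⋆). Moreover, the Hessian of E in s at any s equals D(∇G)(s) − θ, which is invertible whenever all eigenvalues of the symmetric matrix θ are strictly less than the smallest eigenvalue of the symmetric positive-definite matrix D(∇G)(s). -/

import Mathlib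

open scoped RealInnerProductSpace

noncomputable section

abbrev Euc (n : ℕ) := EuclideanSpace ℝ (Fin n)

/-! The Hopfield energy is `G` minus a linear term minus a quadratic form in `s`, so its gradient is
`∇G s - x - A s`: the critical-point equation `∇G s = x + A s` is inverted by `σ = (∇G)⁻¹`, and
differentiating once more gives the Hessian `D(∇G)(s) - A`. Its quadratic form is bounded below by
`μ ‖v‖² - ⟪v, A v⟫ > 0` for `v ≠ 0`, so it is injective, hence bijective in finite dimension. -/

section Gradient

variable {F : Type*} [NormedAddCommGroup F] [InnerProductSpace ℝ F] [CompleteSpace F]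
  {f g : F → ℝ} {f' g' s : F}

open InnerProductSpace

theorem HasGradientAt.add (hf : HasGradientAt f f' s) (hg : HasGradientAt g g' s) :
    HasGradientAt (fun t => f t + g t) (f' + g') s := by
  rw [hasGradientAt_iff_hasFDerivAt] at *
  rw [map_add]
  exact hf.add hg

theorem HasGradientAt.sub (hf : HasGradientAt f f' s) (hg : HasGradientAt g g' s) :
    HasGradientAt (fun t => f t - g t) (f' - g') s := by
  rw [hasGradientAt_iff_hasFDerivAt] at *
  rw [map_sub]
  exact hf.sub hg

theorem hasGradientAt_inner_const_right (x s : F) : HasGradientAt (fun t => ⟪t, x⟫) x s := by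
  simp_rw [hasGradientAt_iff_hasFDerivAt, real_inner_comm x]
  exact (toDual ℝ F x).hasFDerivAt

theorem IsSelfAdjoint.hasGradientAt_neg_half_inner_self_apply {A : F →L[ℝ] F}
    (hA : IsSelfAdjoint A) (s : F) :
    HasGradientAt (fun t => -(1 / 2 : ℝ) * ⟪t, A t⟫) (-A s) s := by
  rw [hasGradientAt_iff_hasFDerivAt]
  refine (((hasFDerivAt_id s).inner ℝ A.hasFDerivAt).const_mul _).congr_fderiv ?_
  ext v
  have hsymm : ⟪A s, v⟫ = ⟪s, A v⟫ := hA.isSymmetric s v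
  simp only [smul_apply, ContinuousLinearMap.comp_apply,
    ContinuousLinearMap.prod_apply, ContinuousLinearMap.coe_id', id_eq, fderivInnerCLM_apply,
    toDual_apply_apply, inner_neg_left, smul_eq_mul, real_inner_comm (A s) v, hsymm]
  ring

theorem ContDiff.differentiable_gradient (hf : ContDiff ℝ 2 f) : Differentiable ℝ (gradient f) :=
  (toDual ℝ F).symm.differentiable.comp
    ((hf.fderiv_right (m := 1) le_rfl).differentiable one_ne_zero)

end Gradient

theorem ContinuousLinearMap.bijective_of_inner_map_self_pos {F : Type*} [NormedAddCommGroup F]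
    [InnerProductSpace ℝ F] [FiniteDimensional ℝ F] (T : F →L[ℝ] F)
    (hT : ∀ v, v ≠ 0 → 0 < ⟪v, T v⟫) : Function.Bijective T := by
  have hinj : Function.Injective T := by
    refine (injective_iff_map_eq_zero T).2 fun v hv => ?_
    by_contra hv0
    simpa [hv] using hT v hv0
  exact ⟨hinj, (LinearMap.injective_iff_surjective (f := T.toLinearMap)).1 hinj⟩

theorem stmt_14_general {n : ℕ}
    (A : Euc n →L[ℝ] Euc n) (hA : IsSelfAdjoint A)
    (G : Euc n → ℝ) (hG : ContDiff ℝ 2 G)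
    (σ : Euc n → Euc n)
    (hσ₁ : Function.LeftInverse σ (gradient G))
    (hσ₂ : Function.RightInverse σ (gradient G))
    (U : Euc n → ℝ) (hU : ∀ s, U s = -(1/2 : ℝ) * ⟪s, A s⟫)
    (E : Euc n → Euc n → ℝ)
    (hE : ∀ s x, E s x = G s - ⟪s, x⟫ + U s)
    (x : Euc n) :
    (∀ s, gradient U s = -(A s)) ∧
    (∀ sstar : Euc n,
      gradient (fun s => E s x) sstar = 0 ↔ sstar = σ (x + A sstar)) ∧
    (∀ s, fderiv ℝ (fun s' => gradient (fun s'' => E s'' x) s') s =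
        fderiv ℝ (gradient G) s - A) ∧
    (∀ s, ∀ μ : ℝ,
      (∀ v, μ * ‖v‖ ^ 2 ≤ ⟪v, (fderiv ℝ (gradient G) s) v⟫) →
      (∀ v, v ≠ 0 → ⟪v, A v⟫ < μ * ‖v‖ ^ 2) →
      Function.Bijective
        (fderiv ℝ (fun s' => gradient (fun s'' => E s'' x) s') s)) := by
  have hgradU : ∀ s, HasGradientAt U (-A s) s := by
    rw [funext hU]
    exact hA.hasGradientAt_neg_half_inner_self_apply
  have hgradE : gradient (fun s => E s x) = fun s => gradient G s - x + -A s := by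
    refine gradient_eq fun s => ?_
    simp only [hE]
    exact ((hG.differentiable two_ne_zero s).hasGradientAt.sub
      (hasGradientAt_inner_const_right x s)).add (hgradU s)
  have hHess : ∀ s, fderiv ℝ (fun s' => gradient (fun s'' => E s'' x) s') s =
      fderiv ℝ (gradient G) s - A := fun s => by
    rw [hgradE, sub_eq_add_neg]
    exact ((hG.differentiable_gradient s).hasFDerivAt.sub_const x |>.add A.hasFDerivAt.neg).fderiv
  let gradG : Euc n ≃ Euc n := ⟨gradient G, σ, hσ₁, hσ₂⟩
  refine ⟨fun s => (hgradU s).gradient, fun s => ?_, hHess, fun s μ hD hAμ => ?_⟩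
  · simp only [hgradE, ← sub_eq_add_neg, sub_sub, sub_eq_zero]
    exact gradG.eq_symm_apply.symm
  · rw [hHess]
    refine ContinuousLinearMap.bijective_of_inner_map_self_pos _ fun v hv => ?_
    rw [sub_apply, inner_sub_right]
    linarith [hD v, hAμ v hv]

/-- Deep Hopfield block: `U(s) = −(1/2)⟪s, A s⟫` (A symmetric) has
gradient `−A s`; critical points of `E(s,θ,x) = G(s) − ⟪s,x⟫ − (1/2)⟪s, A s⟫` are
exactly the fixed points `s⋆ = σ(x + A s⋆)`; the Hessian of `E` in `s` equals
`D(∇G)(s) − A`, invertible when all eigenvalues of `A` lie strictly below the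
smallest eigenvalue of `D(∇G)(s)`. -/
theorem stmt_14 {n : ℕ}
    (A : Euc n →L[ℝ] Euc n) (hA : IsSelfAdjoint A)
    (G : Euc n → ℝ) (hG : ContDiff ℝ 2 G)
    (hGsym : ∀ s, IsSelfAdjoint (fderiv ℝ (gradient G) s))
    (σ : Euc n → Euc n)
    (hσ₁ : Function.LeftInverse σ (gradient G))
    (hσ₂ : Function.RightInverse σ (gradient G))
    (U : Euc n → ℝ) (hU : ∀ s, U s = -(1/2 : ℝ) * ⟪s, A s⟫)
    (E : Euc n → Euc n → ℝ)
    (hE : ∀ s x, E s x = G s - ⟪s, x⟫ + U s)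
    (x : Euc n) :
    (∀ s, gradient U s = -(A s)) ∧
    (∀ sstar : Euc n,
      gradient (fun s => E s x) sstar = 0 ↔ sstar = σ (x + A sstar)) ∧
    (∀ s, fderiv ℝ (fun s' => gradient (fun s'' => E s'' x) s') s =
        fderiv ℝ (gradient G) s - A) ∧
    (∀ s, ∀ μ : ℝ,
      (∀ v, μ * ‖v‖ ^ 2 ≤ ⟪v, (fderiv ℝ (gradient G) s) v⟫) →
      (∀ v, v ≠ 0 → ⟪v, A v⟫ < μ * ‖v‖ ^ 2) →
      Function.Bijective
        (fderiv ℝ (fun s' => gradient (fun s'' => E s'' x) s') s)) :=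
  stmt_14_general A hA G hG σ hσ₁ hσ₂ U hU E hE x
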